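/- Let σ be a stopping time with E σ < ∞. Then lim_{x→∞} P(A_{σ,1}(x))/F̄(x) = E σ. -/

import Mathlib

/-!
For `x ≥ 0` the event `A_{σ,1}(x)` is the disjoint union over `n` of
`{σ > n, S_k ≤ x (k ≤ n), S_n ≤ h(x), ξ_{n+1} > x - S_n}`. The first three conditions are
`𝓕_n`-measurable and `ξ_{n+1}` is independent of `𝓕_n`, so the `n`-th piece has probability
`E[F̄(x - S_n); σ > n, S_k ≤ x (k ≤ n), S_n ≤ h(x)]`. Divided by `F̄(x)`, this is at most
`F̄(x - h(x))/F̄(x) · P(σ > n) ≤ 2 P(σ > n)` for large `x`, and it tends to `P(σ > n)` by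
long-tailedness and dominated convergence. As `∑ P(σ > n) = E σ < ∞`, dominated convergence for
series (Tannery's theorem) gives the limit.
-/

open MeasureTheory ProbabilityTheory Filter Set
open scoped ENNReal ENat

noncomputable section

/-- The tail (right-tail) distribution function `F̄(x) = μ((x,∞))` of a law `μ` on `ℝ`. -/
def rtail (μ : Measure ℝ) (x : ℝ) : ℝ := (μ (Set.Ioi x)).toReal

/-- `μ` (with distribution function `F`) is long-tailed (LT): `F̄(x) > 0` for all `x` and
`F̄(x-h)/F̄(x) → 1` as `x → ∞` for every fixed `h > 0`. -/
def LongTailed (μ : Measure ℝ) : Prop :=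
  (∀ x : ℝ, 0 < μ (Set.Ioi x)) ∧
    ∀ h : ℝ, 0 < h →
      Filter.Tendsto (fun x : ℝ => rtail μ (x - h) / rtail μ x) Filter.atTop (nhds 1)

/-- The distribution `μ` (with distribution function `G`) belongs to the class `S*`:
`Ḡ(x) > 0` for all `x` and `∫_0^x Ḡ(x-y) Ḡ(y) dy ∼ 2 m_{G⁺} Ḡ(x)` as `x → ∞`,
where `m_{G⁺} = ∫_0^∞ Ḡ(t) dt`. -/
def MemSstar (μ : Measure ℝ) : Prop :=
  (∀ x : ℝ, 0 < μ (Set.Ioi x)) ∧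
    Filter.Tendsto
      (fun x : ℝ => (∫ y in (0:ℝ)..x, rtail μ (x - y) * rtail μ y) /
        (2 * (∫ y in Set.Ioi (0:ℝ), rtail μ y) * rtail μ x))
      Filter.atTop (nhds 1)

/-- The partial sums `S_n` of the random walk: `walk ξ n = ξ 0 + ⋯ + ξ (n-1)`,
where `ξ i` denotes the increment `ξ_{i+1}` of the paper (so `S_0 = 0`). -/
def walk {Ω : Type*} (ξ : ℕ → Ω → ℝ) (n : ℕ) (ω : Ω) : ℝ := ∑ i ∈ Finset.range n, ξ i ω

/-- The event `A_{σ,1}(x) = {μ(x) ≤ σ, S_{μ(x)-1} ≤ h(x)}`, where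
`μ(x) = min{n : S_n > x}` is the first passage time over level `x`. -/
def eventA1 {Ω : Type*} (ξ : ℕ → Ω → ℝ) (σ : Ω → ℕ) (h : ℝ → ℝ) (x : ℝ) : Set Ω :=
  {ω | ∃ n : ℕ, n ≤ σ ω ∧ (∀ k, k < n → walk ξ k ω ≤ x) ∧ x < walk ξ n ω ∧
    walk ξ (n - 1) ω ≤ h x}

open Function
open scoped Topology

section Tail

variable {μ : Measure ℝ}

lemma rtail_nonneg (x : ℝ) : 0 ≤ rtail μ x := ENNReal.toReal_nonneg

lemma rtail_pos [IsFiniteMeasure μ] (hpos : ∀ x, 0 < μ (Ioi x)) (x : ℝ) : 0 < rtail μ x :=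
  ENNReal.toReal_pos (hpos x).ne' (measure_ne_top μ _)

lemma rtail_antitone [IsFiniteMeasure μ] : Antitone (rtail μ) := fun _ _ hab =>
  ENNReal.toReal_mono (measure_ne_top μ _) (measure_mono (Ioi_subset_Ioi hab))

lemma LongTailed.tendsto_rtail_sub_div [IsFiniteMeasure μ] (hlt : LongTailed μ) (s : ℝ) :
    Tendsto (fun x => rtail μ (x - s) / rtail μ x) atTop (𝓝 1) := by
  rcases lt_trichotomy s 0 with hs | rfl | hs
  · have hshift := (hlt.2 (-s) (neg_pos.2 hs)).comp
      (tendsto_atTop_add_const_right _ (-s) tendsto_id)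
    simpa [comp_def, inv_div, sub_eq_add_neg] using hshift.inv₀ one_ne_zero
  · simp [div_self (rtail_pos hlt.1 _).ne']
  · exact hlt.2 s hs

end Tail

section Independence

variable {Ω : Type*} {𝓖 : MeasurableSpace Ω} [mΩ : MeasurableSpace Ω] {P : Measure Ω}
  [IsFiniteMeasure P]

lemma ProbabilityTheory.IndepFun.measure_preimage_eq_lintegral {β : Type*} [MeasurableSpace β]
    {W : Ω → β} {X : Ω → ℝ} (hW : Measurable W) (hX : Measurable X) (hWX : IndepFun W X P)
    {S : Set (β × ℝ)} (hS : MeasurableSet S) :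
    P ((fun ω => (W ω, X ω)) ⁻¹' S) = ∫⁻ ω, P.map X (Prod.mk (W ω) ⁻¹' S) ∂P := by
  rw [← Measure.map_apply (hW.prodMk hX) hS,
    hWX.map_prod_eq_prod_map_map hW.aemeasurable hX.aemeasurable, Measure.prod_apply hS,
    lintegral_map (measurable_measure_prodMk_left hS) hW]

lemma ProbabilityTheory.Indep.measure_inter_lt_eq_setLIntegral (h𝓖 : 𝓖 ≤ mΩ)
    {X T : Ω → ℝ} {C : Set Ω} (hX : Measurable X) (hT : Measurable[𝓖] T) (hC : MeasurableSet[𝓖] C)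
    (hindep : Indep (MeasurableSpace.comap X inferInstance) 𝓖 P) :
    P (C ∩ {ω | T ω < X ω}) = ∫⁻ ω in C, P.map X (Ioi (T ω)) ∂P := by
  -- encode `C` by the `Prop`-valued `ω ∈ C`, so that `(T, 1_C)` is one `𝓖`-measurable variable
  have hW : Measurable[𝓖] fun ω => (T ω, ω ∈ C) := hT.prodMk ((@measurable_mem _ _ 𝓖).2 hC)
  have hWX : IndepFun (fun ω => (T ω, ω ∈ C)) X P :=
    (indep_of_indep_of_le_right hindep hW.comap_le).symm
  have hS : MeasurableSet {p : (ℝ × Prop) × ℝ | p.1.2 ∧ p.1.1 < p.2} :=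
    (measurableSet_setOfPred.2 measurable_fst.snd).inter
      (measurableSet_lt measurable_fst.fst measurable_snd)
  rw [← lintegral_indicator (h𝓖 _ hC)]
  convert hWX.measure_preimage_eq_lintegral (hW.mono h𝓖 le_rfl) hX hS using 2
  · ext ω
    simp [and_comm]
  · funext ω
    by_cases hω : ω ∈ C <;> simp [hω, Ioi]

end Independence

section NatValued

variable {Ω : Type*} [MeasurableSpace Ω] {P : Measure Ω} {σ : Ω → ℕ}

lemma natCast_eq_tsum_ite_lt (k : ℕ) :
    (k : ℝ≥0∞) = ∑' n : ℕ, if n < k then 1 else 0 := by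
  rw [tsum_eq_sum (s := Finset.range k) fun n hn => if_neg (by simpa using hn)]
  simp [Finset.sum_ite_of_true fun n hn => Finset.mem_range.1 hn]

lemma lintegral_natCast_eq_tsum_measure_lt (hσ : ∀ n, MeasurableSet {ω | n < σ ω}) :
    ∫⁻ ω, (σ ω : ℝ≥0∞) ∂P = ∑' n, P {ω | n < σ ω} := by
  calc ∫⁻ ω, (σ ω : ℝ≥0∞) ∂P = ∫⁻ ω, ∑' n, {ω | n < σ ω}.indicator 1 ω ∂P := by
        congr with ω
        simp [natCast_eq_tsum_ite_lt (σ ω), Set.indicator_apply]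
    _ = ∑' n, P {ω | n < σ ω} := by
        rw [lintegral_tsum fun n => (measurable_one.indicator (hσ n)).aemeasurable]
        simp only [lintegral_indicator_one (hσ _)]

lemma hasSum_measureReal_lt (hσ : ∀ n, MeasurableSet {ω | n < σ ω})
    (hint : Integrable (fun ω => (σ ω : ℝ)) P) :
    HasSum (fun n => P.real {ω | n < σ ω}) (∫ ω, (σ ω : ℝ) ∂P) := by
  have hlin := lintegral_natCast_eq_tsum_measure_lt (P := P) hσ
  have hfin : ∑' n, P {ω | n < σ ω} ≠ ∞ := by
    simpa [← hlin] using hint.lintegral_lt_top.ne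
  rw [integral_eq_lintegral_of_nonneg_ae (ae_of_all _ fun ω => Nat.cast_nonneg _)
    hint.aestronglyMeasurable]
  simp only [ENNReal.ofReal_natCast, hlin,
    ENNReal.tsum_toReal_eq (ENNReal.ne_top_of_tsum_ne_top hfin)]
  exact ENNReal.hasSum_toReal hfin

end NatValued

section Walk

variable {Ω : Type*} {ξ : ℕ → Ω → ℝ} {σ : Ω → ℕ} {h : ℝ → ℝ} {x : ℝ} {n : ℕ}

lemma walk_zero (ξ : ℕ → Ω → ℝ) (ω : Ω) : walk ξ 0 ω = 0 := by
  simp [walk]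

lemma walk_succ (ξ : ℕ → Ω → ℝ) (n : ℕ) (ω : Ω) : walk ξ (n + 1) ω = walk ξ n ω + ξ n ω :=
  Finset.sum_range_succ _ _

def preCrossing (ξ : ℕ → Ω → ℝ) (σ : Ω → ℕ) (h : ℝ → ℝ) (x : ℝ) (n : ℕ) : Set Ω :=
  {ω | n < σ ω ∧ (∀ k ≤ n, walk ξ k ω ≤ x) ∧ walk ξ n ω ≤ h x}

/-- As `ξ n` is the increment `ξ_{n+1}` of the paper, this is the part of `A_{σ,1}(x)` on which
`μ(x) = n + 1`. -/
def crossingAt (ξ : ℕ → Ω → ℝ) (σ : Ω → ℕ) (h : ℝ → ℝ) (x : ℝ) (n : ℕ) : Set Ω :=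
  preCrossing ξ σ h x n ∩ {ω | x - walk ξ n ω < ξ n ω}

lemma rtail_sub_walk_le_of_mem_preCrossing {μ : Measure ℝ} [IsFiniteMeasure μ] {ω : Ω}
    (hω : ω ∈ preCrossing ξ σ h x n) : rtail μ (x - walk ξ n ω) ≤ rtail μ (x - h x) :=
  rtail_antitone (sub_le_sub_left hω.2.2 x)

lemma mem_crossingAt_iff {ω : Ω} : ω ∈ crossingAt ξ σ h x n ↔
    n < σ ω ∧ (∀ k ≤ n, walk ξ k ω ≤ x) ∧ walk ξ n ω ≤ h x ∧ x < walk ξ (n + 1) ω := by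
  simp only [crossingAt, preCrossing, mem_inter_iff, mem_ofPred_eq, walk_succ, and_assoc,
    sub_lt_iff_lt_add']

lemma eventA1_eq_iUnion_crossingAt (hx : 0 ≤ x) :
    eventA1 ξ σ h x = ⋃ n, crossingAt ξ σ h x n := by
  ext ω
  simp only [eventA1, mem_ofPred_eq, mem_iUnion, mem_crossingAt_iff]
  constructor
  · rintro ⟨_ | n, hσ, hbelow, hcross, hh⟩
    · exact absurd hcross (by simpa [walk_zero] using hx)
    · exact ⟨n, hσ, fun k hk => hbelow k (Nat.lt_succ_of_le hk), hh, hcross⟩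
  · rintro ⟨n, hσ, hbelow, hh, hcross⟩
    exact ⟨n + 1, hσ, fun k hk => hbelow k (Nat.le_of_lt_succ hk), hcross, hh⟩

lemma pairwise_disjoint_crossingAt :
    Pairwise (Disjoint on fun n => crossingAt ξ σ h x n) := by
  refine pairwise_disjoint_on (fun n => crossingAt ξ σ h x n) |>.2 fun m n hmn => ?_
  refine Set.disjoint_left.2 fun ω hm hn => ?_
  have hcross := (mem_crossingAt_iff.1 hm).2.2.2
  have hbelow := (mem_crossingAt_iff.1 hn).2.1 (m + 1) hmn
  linarith

lemma measureReal_eventA1_eq_tsum [MeasurableSpace Ω] {P : Measure Ω} [IsFiniteMeasure P]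
    (hmeas : ∀ n, MeasurableSet (crossingAt ξ σ h x n)) (hx : 0 ≤ x) :
    P.real (eventA1 ξ σ h x) = ∑' n, P.real (crossingAt ξ σ h x n) := by
  rw [measureReal_def, eventA1_eq_iUnion_crossingAt hx,
    measure_iUnion pairwise_disjoint_crossingAt hmeas,
    ENNReal.tsum_toReal_eq fun _ => measure_ne_top _ _]
  rfl

end Walk

section Filtration

variable {Ω : Type*} {ξ : ℕ → Ω → ℝ} {σ : Ω → ℕ} {h : ℝ → ℝ} {𝓕 : ℕ → MeasurableSpace Ω}

lemma measurable_walk_of_le (hFmono : Monotone 𝓕) (hFadapt : ∀ n, Measurable[𝓕 (n + 1)] (ξ n))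
    {k n : ℕ} (hkn : k ≤ n) : Measurable[𝓕 n] (walk ξ k) :=
  Finset.measurable_sum _ fun i hi =>
    (hFadapt i).mono (hFmono (by simpa using (Finset.mem_range.1 hi).trans_le hkn)) le_rfl

lemma measurableSet_lt_of_measurableSet_le (hstop : ∀ n : ℕ, MeasurableSet[𝓕 n] {ω | σ ω ≤ n})
    (n : ℕ) : MeasurableSet[𝓕 n] {ω | n < σ ω} := by
  simpa only [compl_ofPred, not_le] using (hstop n).compl

lemma measurableSet_preCrossing (hFmono : Monotone 𝓕)
    (hFadapt : ∀ n, Measurable[𝓕 (n + 1)] (ξ n))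
    (hstop : ∀ n : ℕ, MeasurableSet[𝓕 n] {ω | σ ω ≤ n}) (x : ℝ) (n : ℕ) :
    MeasurableSet[𝓕 n] (preCrossing ξ σ h x n) := by
  have hle : ∀ k ≤ n, MeasurableSet[𝓕 n] {ω | walk ξ k ω ≤ x} := fun k hk =>
    measurableSet_le (measurable_walk_of_le hFmono hFadapt hk) measurable_const
  simp only [preCrossing, ofPred_and, ofPred_forall]
  exact (measurableSet_lt_of_measurableSet_le hstop n).inter
    ((MeasurableSet.iInter fun k => .iInter fun hk => hle k hk).inter
      (measurableSet_le (measurable_walk_of_le hFmono hFadapt le_rfl) measurable_const))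

lemma measureReal_crossingAt [mΩ : MeasurableSpace Ω] {P : Measure Ω} [IsFiniteMeasure P]
    {μ : Measure ℝ} (hFle : ∀ n, 𝓕 n ≤ mΩ) (hFmono : Monotone 𝓕)
    (hFadapt : ∀ n, Measurable[𝓕 (n + 1)] (ξ n))
    (hFindep : ∀ n, Indep (MeasurableSpace.comap (ξ n) inferInstance) (𝓕 n) P)
    (hstop : ∀ n : ℕ, MeasurableSet[𝓕 n] {ω | σ ω ≤ n}) {n : ℕ} (hlaw : P.map (ξ n) = μ)
    (x : ℝ) :
    P.real (crossingAt ξ σ h x n) =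
      ∫ ω in preCrossing ξ σ h x n, rtail μ (x - walk ξ n ω) ∂P := by
  subst hlaw
  have hξ : Measurable (ξ n) := (hFadapt n).mono (hFle _) le_rfl
  have hwalk : Measurable[𝓕 n] (walk ξ n) := measurable_walk_of_le hFmono hFadapt le_rfl
  have htail : Measurable fun t => P.map (ξ n) (Ioi t) :=
    Antitone.measurable fun _ _ hab => measure_mono (Ioi_subset_Ioi hab)
  rw [measureReal_def, crossingAt, (hFindep n).measure_inter_lt_eq_setLIntegral (hFle n) hξ
    (T := fun ω => x - walk ξ n ω) (measurable_const.sub hwalk)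
    (measurableSet_preCrossing hFmono hFadapt hstop x n),
    ← integral_toReal]
  · rfl
  · exact (htail.comp (measurable_const.sub (hwalk.mono (hFle n) le_rfl))).aemeasurable
  · exact ae_of_all _ fun _ => measure_lt_top _ _

end Filtration

section Asymptotics

variable {Ω : Type*} [MeasurableSpace Ω] {P : Measure Ω} [IsFiniteMeasure P] {μ : Measure ℝ}
  [IsFiniteMeasure μ] {ξ : ℕ → Ω → ℝ} {σ : Ω → ℕ} {h : ℝ → ℝ}

lemma norm_setIntegral_preCrossing_div_le (hpos : ∀ x, 0 < μ (Ioi x)) (x : ℝ) (n : ℕ) :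
    ‖(∫ ω in preCrossing ξ σ h x n, rtail μ (x - walk ξ n ω) ∂P) / rtail μ x‖ ≤
      rtail μ (x - h x) / rtail μ x * P.real {ω | n < σ ω} := by
  have hle : ‖∫ ω in preCrossing ξ σ h x n, rtail μ (x - walk ξ n ω) ∂P‖ ≤
      rtail μ (x - h x) * P.real (preCrossing ξ σ h x n) :=
    norm_setIntegral_le_of_norm_le_const (measure_lt_top _ _) fun ω hω => by
      rw [Real.norm_of_nonneg (rtail_nonneg _)]
      exact rtail_sub_walk_le_of_mem_preCrossing hω
  rw [norm_div, Real.norm_of_nonneg (rtail_pos hpos x).le, div_mul_eq_mul_div]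
  gcongr
  · exact (rtail_pos hpos x).le
  · exact hle.trans (mul_le_mul_of_nonneg_left (measureReal_mono fun ω hω => hω.1)
      (rtail_nonneg _))

lemma tendsto_setIntegral_preCrossing_div (hlt : LongTailed μ) (hh2 : Tendsto h atTop atTop)
    (hh3 : Tendsto (fun x => rtail μ (x - h x) / rtail μ x) atTop (𝓝 1)) {n : ℕ}
    (hwalk : Measurable (walk ξ n)) (hσ : MeasurableSet {ω | n < σ ω})
    (hC : ∀ x, MeasurableSet (preCrossing ξ σ h x n)) :
    Tendsto (fun x => (∫ ω in preCrossing ξ σ h x n, rtail μ (x - walk ξ n ω) ∂P) / rtail μ x)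
      atTop (𝓝 (P.real {ω | n < σ ω})) := by
  simp_rw [← integral_div, ← integral_indicator (hC _)]
  rw [← integral_indicator_one hσ]
  refine tendsto_integral_filter_of_dominated_convergence (fun _ => 2) ?_ ?_
    (integrable_const 2) (ae_of_all _ fun ω => ?_)
  · refine .of_forall fun x => (Measurable.indicator ?_ (hC x)).aestronglyMeasurable
    exact (rtail_antitone.measurable.comp (measurable_const.sub hwalk)).div_const _
  · filter_upwards [hh3.eventually_le_const one_lt_two] with x hx
    refine ae_of_all _ fun ω => ?_
    by_cases hω : ω ∈ preCrossing ξ σ h x n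
    · have hpos := rtail_pos hlt.1 x
      rw [indicator_of_mem hω, Real.norm_of_nonneg (div_nonneg (rtail_nonneg _) hpos.le)]
      calc rtail μ (x - walk ξ n ω) / rtail μ x ≤ rtail μ (x - h x) / rtail μ x := by
            gcongr; exact rtail_sub_walk_le_of_mem_preCrossing hω
        _ ≤ 2 := hx
    · simp [indicator_of_notMem hω]
  · by_cases hn : n < σ ω
    · have hmem : ∀ᶠ x in atTop, ω ∈ preCrossing ξ σ h x n := by
        filter_upwards [(eventually_all_finite (finite_Iic n)).2 fun k _ =>
          eventually_ge_atTop (walk ξ k ω), hh2.eventually_ge_atTop (walk ξ n ω)] with x hx hhx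
        exact ⟨hn, fun k hk => hx k hk, hhx⟩
      rw [indicator_of_mem (show ω ∈ {ω | n < σ ω} from hn)]
      refine (hlt.tendsto_rtail_sub_div (walk ξ n ω)).congr' ?_
      filter_upwards [hmem] with x hx
      rw [indicator_of_mem hx]
    · have hnot : ∀ x, ω ∉ preCrossing ξ σ h x n := fun x hω => hn hω.1
      simp [indicator_of_notMem (hnot _), indicator_of_notMem (show ω ∉ {ω | n < σ ω} from hn)]

end Asymptotics

theorem eventA1_asymptotics_general
    {Ω : Type*} [MeasurableSpace Ω] (P : Measure Ω) [IsProbabilityMeasure P]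
    (ξ : ℕ → Ω → ℝ) (μ : Measure ℝ) [IsProbabilityMeasure μ]
    (hlaw : ∀ n, P.map (ξ n) = μ)
    (hlt : LongTailed μ)
    (h : ℝ → ℝ)
    (hh2 : Filter.Tendsto h Filter.atTop Filter.atTop)
    (hh3 : Filter.Tendsto (fun x => rtail μ (x - h x) / rtail μ x) Filter.atTop (nhds 1))
    (𝓕 : ℕ → MeasurableSpace Ω) (hFmono : Monotone 𝓕)
    (hFle : ∀ n, 𝓕 n ≤ ‹MeasurableSpace Ω›)
    (hFadapt : ∀ n, Measurable[𝓕 (n + 1)] (ξ n))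
    (hFindep : ∀ n, Indep (MeasurableSpace.comap (ξ n) inferInstance) (𝓕 n) P)
    (σ : Ω → ℕ) (hstop : ∀ n : ℕ, MeasurableSet[𝓕 n] {ω | σ ω ≤ n})
    (hσint : Integrable (fun ω => (σ ω : ℝ)) P) :
    Filter.Tendsto (fun x : ℝ => (P (eventA1 ξ σ h x)).toReal / rtail μ x)
      Filter.atTop (nhds (∫ ω, (σ ω : ℝ) ∂P)) := by
  have hσ n : MeasurableSet {ω | n < σ ω} :=
    hFle n _ (measurableSet_lt_of_measurableSet_le hstop n)
  have hwalk n : Measurable (walk ξ n) :=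
    (measurable_walk_of_le hFmono hFadapt le_rfl).mono (hFle n) le_rfl
  have hC x n : MeasurableSet (preCrossing ξ σ h x n) :=
    hFle n _ (measurableSet_preCrossing hFmono hFadapt hstop x n)
  have hcross x n : MeasurableSet (crossingAt ξ σ h x n) :=
    (hC x n).inter (measurableSet_lt (measurable_const.sub (hwalk n))
      ((hFadapt n).mono (hFle _) le_rfl))
  have hdecomp : ∀ᶠ x in atTop, (P (eventA1 ξ σ h x)).toReal / rtail μ x =
      ∑' n, (∫ ω in preCrossing ξ σ h x n, rtail μ (x - walk ξ n ω) ∂P) / rtail μ x := by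
    filter_upwards [eventually_ge_atTop 0] with x hx
    rw [← measureReal_def, measureReal_eventA1_eq_tsum (hcross x) hx, ← tsum_div_const]
    simp only [measureReal_crossingAt hFle hFmono hFadapt hFindep hstop (hlaw _)]
  have hEσ := hasSum_measureReal_lt hσ hσint
  rw [← hEσ.tsum_eq]
  refine (tendsto_tsum_of_dominated_convergence (hEσ.summable.mul_left 2)
    (fun n => tendsto_setIntegral_preCrossing_div hlt hh2 hh3 (hwalk n) (hσ n) (hC · n))
    ?_).congr' (hdecomp.mono fun x hx => hx.symm)
  filter_upwards [hh3.eventually_le_const one_lt_two] with x hx n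
  exact (norm_setIntegral_preCrossing_div_le hlt.1 x n).trans
    (mul_le_mul_of_nonneg_right hx measureReal_nonneg)

/-- **Lemma 1** (Foss–Zachary).  Under NEG and LT, with `h : ℝ₊ → ℝ₊` satisfying
`h(x) ≤ x/2`, `h(x) → ∞` and `F̄(x - h(x))/F̄(x) → 1`, for any stopping time `σ` with
`E σ < ∞` one has `P(A_{σ,1}(x))/F̄(x) → E σ` as `x → ∞`. -/
theorem eventA1_asymptotics
    {Ω : Type*} [MeasurableSpace Ω] (P : Measure Ω) [IsProbabilityMeasure P]
    (ξ : ℕ → Ω → ℝ) (μ : Measure ℝ) [IsProbabilityMeasure μ]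
    (hmeas : ∀ n, Measurable (ξ n))
    (hlaw : ∀ n, P.map (ξ n) = μ)
    (hiid : iIndepFun ξ P)
    (m : ℝ) (hm : 0 < m) (hint : Integrable id μ) (hmean : (∫ x, x ∂μ) = -m)
    (hlt : LongTailed μ)
    (h : ℝ → ℝ) (hh0 : ∀ x, 0 ≤ h x) (hh1 : ∀ x, 0 ≤ x → h x ≤ x / 2)
    (hh2 : Filter.Tendsto h Filter.atTop Filter.atTop)
    (hh3 : Filter.Tendsto (fun x => rtail μ (x - h x) / rtail μ x) Filter.atTop (nhds 1))
    (𝓕 : ℕ → MeasurableSpace Ω) (hFmono : Monotone 𝓕)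
    (hFle : ∀ n, 𝓕 n ≤ ‹MeasurableSpace Ω›)
    (hFadapt : ∀ n, Measurable[𝓕 (n + 1)] (ξ n))
    (hFindep : ∀ n, Indep (MeasurableSpace.comap (ξ n) inferInstance) (𝓕 n) P)
    (σ : Ω → ℕ) (hstop : ∀ n : ℕ, MeasurableSet[𝓕 n] {ω | σ ω ≤ n})
    (hσint : Integrable (fun ω => (σ ω : ℝ)) P) :
    Filter.Tendsto (fun x : ℝ => (P (eventA1 ξ σ h x)).toReal / rtail μ x)
      Filter.atTop (nhds (∫ ω, (σ ω : ℝ) ∂P)) :=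
  eventA1_asymptotics_general P ξ μ hlaw hlt h hh2 hh3 𝓕 hFmono hFle hFadapt hFindep σ hstop hσint
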